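/- Incompleteness of the power spectrum: for every n ≥ 3 there exist two functions f, g : ZMod n → ℂ with identical power spectra (|f̂(k)| = |ĝ(k)| for all k) such that g is not a cyclic translate of f. -/

import Mathlib

open Complex Finset

/-- Discrete Fourier transform of a signal on `ZMod n`. -/
noncomputable def dft (n : ℕ) [NeZero n] (f : ZMod n → ℂ) (k : ZMod n) : ℂ :=
  ∑ g : ZMod n, Complex.exp (-2 * Real.pi * Complex.I * k.val * g.val / n) * f g

/-!
Conjugate reflection `x ↦ conj (f (-x))` conjugates the Fourier transform, so it preserves the
power spectrum. For `f = 1 + (i - 1) δ₁` it produces the value `-i`, which `f`, and hence every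
cyclic translate of `f`, never takes.
-/

open ComplexConjugate
open scoped ZMod

theorem dft_eq_zmod_dft (n : ℕ) [NeZero n] (f : ZMod n → ℂ) : dft n f = 𝓕 f := by
  funext k
  refine sum_congr rfl fun j _ ↦ ?_
  have hval : -(j * k) = ((-(j.val * k.val : ℕ) : ℤ) : ZMod n) := by simp
  rw [smul_eq_mul, hval, ZMod.stdAddChar_coe]
  push_cast
  ring_nf

theorem ZMod.dft_conj_comp_neg {N : ℕ} [NeZero N] (Φ : ZMod N → ℂ) (k : ZMod N) :
    𝓕 (fun j ↦ conj (Φ (-j))) k = conj (𝓕 Φ k) := by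
  rw [dft_apply, dft_apply, map_sum]
  refine Fintype.sum_equiv (Equiv.neg (ZMod N)) _ _ fun j ↦ ?_
  simp only [Equiv.neg_apply, neg_neg, neg_mul, smul_eq_mul, map_mul,
    AddChar.map_neg_eq_conj]

theorem norm_dft_conj_comp_neg (n : ℕ) [NeZero n] (f : ZMod n → ℂ) (k : ZMod n) :
    ‖dft n (fun x ↦ conj (f (-x))) k‖ = ‖dft n f k‖ := by
  rw [dft_eq_zmod_dft, dft_eq_zmod_dft, ZMod.dft_conj_comp_neg, Complex.norm_conj]

theorem powerSpectrum_incomplete_general (n : ℕ) [NeZero n] :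
    ∃ f g : ZMod n → ℂ,
      (∀ k : ZMod n, ‖dft n f k‖ = ‖dft n g k‖) ∧
      ¬ ∃ t : ZMod n, ∀ x : ZMod n, g x = f (x - t) := by
  set f : ZMod n → ℂ := fun x ↦ if x = 1 then I else 1
  have hf_ne : ∀ y, f y ≠ -I := fun y ↦ by
    by_cases hy : y = 1 <;> norm_num [f, hy, Complex.ext_iff]
  refine ⟨f, fun x ↦ conj (f (-x)), fun k ↦ (norm_dft_conj_comp_neg n f k).symm, ?_⟩
  rintro ⟨t, ht⟩
  apply hf_ne (-1 - t)
  rw [← ht (-1)]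
  simp [f]

/-- Incompleteness of the power spectrum: for every `n ≥ 3` there exist signals `f, g`
with identical power spectra such that `g` is not a cyclic translate of `f`. -/
theorem powerSpectrum_incomplete (n : ℕ) (hn : 3 ≤ n) [NeZero n] :
    ∃ f g : ZMod n → ℂ,
      (∀ k : ZMod n, ‖dft n f k‖ = ‖dft n g k‖) ∧
      ¬ ∃ t : ZMod n, ∀ x : ZMod n, g x = f (x - t) :=
  powerSpectrum_incomplete_general n
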